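/- Let σ: 𝒜 → ℬ⁺ and τ: ℬ → 𝒞⁺ be non-erasing morphisms between finite alphabets, let X ⊆ 𝒜^ℤ be a shift, and let Y = ∪_{k∈ℤ} T^k σ(X). Then: (1) τ∘σ is recognizable in X if and only if σ is recognizable in X and τ is recognizable in Y; (2) if σ is recognizable in X for aperiodic points and τ is recognizable in Y for aperiodic points, then τ∘σ is recognizable in X for aperiodic points; (3) if τ∘σ is recognizable in X for aperiodic points, then τ is recognizable in Y for aperiodic points. -/

import Mathlib

open scoped BigOperators

namespace Recog

variable {A B C : Type*}

/-- A morphism assigning a word to each letter is non-erasing if every image is nonempty. -/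
def NonErasing (σ : A → List B) : Prop := ∀ a, σ a ≠ []

/-- Apply a morphism letterwise to a finite word, concatenating the images. -/
def wordApply (σ : A → List B) : List A → List B
  | [] => []
  | a :: w => σ a ++ wordApply σ w

/-- Composition of morphisms `τ ∘ σ`. -/
def comp (τ : B → List C) (σ : A → List B) : A → List C := fun a => wordApply τ (σ a)

/-- The `ℓ`-th cutting point of the representation `(0, x)`:
`|σ(x_[0,ℓ))|` for `ℓ ≥ 0` and `-|σ(x_[ℓ,0))|` for `ℓ < 0`. -/
def cut (σ : A → List B) (x : ℤ → A) (ℓ : ℤ) : ℤ :=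
  if 0 ≤ ℓ then ∑ i ∈ Finset.range ℓ.toNat, ((σ (x i)).length : ℤ)
  else -∑ i ∈ Finset.range (-ℓ).toNat, ((σ (x (-(i : ℤ) - 1))).length : ℤ)

/-- `y` is the bi-infinite image `σ(x)`, where `σ(x₀)` starts at position `0`. -/
def IsSubstPt (σ : A → List B) (x : ℤ → A) (y : ℤ → B) : Prop :=
  ∀ (ℓ : ℤ) (j : ℕ) (hj : j < (σ (x ℓ)).length),
    y (cut σ x ℓ + j) = (σ (x ℓ)).get ⟨j, hj⟩

/-- `(k, x)` is a `σ`-representation of `y`, i.e. `y = T^k σ(x)`. -/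
def IsRep (σ : A → List B) (y : ℤ → B) (k : ℤ) (x : ℤ → A) : Prop :=
  IsSubstPt σ x fun n => y (n - k)

/-- `(k, x)` is a centered `σ`-representation of `y`: `y = T^k σ(x)` with `0 ≤ k < |σ(x₀)|`. -/
def IsCenteredRep (σ : A → List B) (y : ℤ → B) (k : ℤ) (x : ℤ → A) : Prop :=
  IsRep σ y k x ∧ 0 ≤ k ∧ k < ((σ (x 0)).length : ℤ)

/-- `y` is aperiodic: `T^p y ≠ y` for all `p ≥ 1`. -/
def Aperiodic (y : ℤ → B) : Prop := ∀ p : ℕ, 1 ≤ p → (fun n => y (n + p)) ≠ y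

/-- `y` is periodic: `T^p y = y` for some `p ≥ 1`. -/
def Periodic (y : ℤ → B) : Prop := ∃ p : ℕ, 1 ≤ p ∧ (fun n => y (n + p)) = y

/-- The set of `σ`-cutting points of the representation `(k, x)`. -/
def cutSet (σ : A → List B) (x : ℤ → A) (k : ℤ) : Set ℤ :=
  {m : ℤ | ∃ ℓ : ℤ, m = cut σ x ℓ - k}

/-- `σ` is recognizable in `X`: every `y` has at most one centered `σ`-representation in `X`. -/
def RecIn (σ : A → List B) (X : Set (ℤ → A)) : Prop :=
  ∀ (y : ℤ → B) (k k' : ℤ) (x x' : ℤ → A), x ∈ X → x' ∈ X →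
    IsCenteredRep σ y k x → IsCenteredRep σ y k' x' → k = k' ∧ x = x'

/-- `σ` is recognizable in `X` for aperiodic points. -/
def RecInAp (σ : A → List B) (X : Set (ℤ → A)) : Prop :=
  ∀ y : ℤ → B, Aperiodic y → ∀ (k k' : ℤ) (x x' : ℤ → A), x ∈ X → x' ∈ X →
    IsCenteredRep σ y k x → IsCenteredRep σ y k' x' → k = k' ∧ x = x'

/-- `σ` is left permutative: the first letters of `σ a` and `σ b` differ for distinct `a, b`. -/
def LeftPermutative (σ : A → List B) : Prop :=
  ∀ a b : A, a ≠ b → (σ a).head? ≠ (σ b).head?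

/-- `σ` is right permutative: the last letters of `σ a` and `σ b` differ for distinct `a, b`. -/
def RightPermutative (σ : A → List B) : Prop :=
  ∀ a b : A, a ≠ b → (σ a).getLast? ≠ (σ b).getLast?

/-- `σ` and `σ'` are rotationally conjugate. -/
def RotConj (σ σ' : A → List B) : Prop :=
  ∃ w : List B, (∀ a, σ a ++ w = w ++ σ' a) ∨ (∀ a, w ++ σ a = σ' a ++ w)

/-- The incidence matrix of `σ`, over `ℚ`: entry `(b, a)` counts occurrences of `b` in `σ a`. -/
noncomputable def incidence (σ : A → List B) [DecidableEq B] : Matrix B A ℚ :=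
  Matrix.of fun b a => ((σ a).count b : ℚ)

/-- The finite subword `x_[i, i+m)` of a bi-infinite sequence. -/
def factor (x : ℤ → A) (i : ℤ) (m : ℕ) : List A := (List.range m).map fun j => x (i + j)

/-- The language of a bi-infinite sequence: the set of its finite subwords. -/
def lang (x : ℤ → A) : Set (List A) := {w | ∃ (i : ℤ) (m : ℕ), w = factor x i m}

/-- `σ` is injective on bi-infinite sequences. -/
def InjZ (σ : A → List B) : Prop :=
  ∀ (x x' : ℤ → A) (y : ℤ → B), IsSubstPt σ x y → IsSubstPt σ x' y → x = x'

/-- Cutting points for one-sided sequences. -/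
def cutN (σ : A → List B) (x : ℕ → A) (ℓ : ℕ) : ℕ :=
  ∑ i ∈ Finset.range ℓ, (σ (x i)).length

/-- `y` is the one-sided image `σ(x)` for `x : ℕ → A`. -/
def IsSubstPtN (σ : A → List B) (x : ℕ → A) (y : ℕ → B) : Prop :=
  ∀ (ℓ j : ℕ) (hj : j < (σ (x ℓ)).length),
    y (cutN σ x ℓ + j) = (σ (x ℓ)).get ⟨j, hj⟩

/-- `σ` is injective on one-sided (right-infinite) sequences. -/
def InjN (σ : A → List B) : Prop :=
  ∀ (x x' : ℕ → A) (y : ℕ → B), IsSubstPtN σ x y → IsSubstPtN σ x' y → x = x'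

/-- The total length `⦀σ⦀ = Σ_a |σ a|`. -/
def totalLen (σ : A → List B) [Fintype A] : ℕ := ∑ a, (σ a).length

/-- `X` is invariant under the two-sided shift. -/
def ShiftInvariant (X : Set (ℤ → A)) : Prop :=
  ∀ x ∈ X, (fun n => x (n + 1)) ∈ X ∧ (fun n => x (n - 1)) ∈ X

/-- The iterate `σ^n` of a substitution, applied to a letter. -/
def iter (σ : A → List A) : ℕ → A → List A
  | 0, a => [a]
  | n + 1, a => wordApply (iter σ n) (σ a)

/-- The language `ℒ_σ` of a substitution: subwords of the `σ^n(a)`. -/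
def subLang (σ : A → List A) : Set (List A) := {w | ∃ (n : ℕ) (a : A), w <:+: iter σ n a}

/-- The substitutive shift `X_σ`. -/
def subX (σ : A → List A) : Set (ℤ → A) := {x | ∀ w ∈ lang x, w ∈ subLang σ}

/-- `σ` is recognizable in the sense of Mossé for `x`. -/
def MosseRec (σ : A → List B) (x : ℤ → A) : Prop :=
  ∃ ℓ : ℕ, ∀ y : ℤ → B, IsSubstPt σ x y →
    ∀ m ∈ cutSet σ x 0, ∀ m' : ℤ,
      factor y (m - ℓ) (2 * ℓ) = factor y (m' - ℓ) (2 * ℓ) → m' ∈ cutSet σ x 0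

section Sadic

variable {𝒜 : ℕ → Type*}

/-- `block σ N = σ_[0,N)`, mapping a letter of `𝒜 N` to a word over `𝒜 0`. -/
def block (σ : ∀ n, 𝒜 (n + 1) → List (𝒜 n)) : ∀ N, 𝒜 N → List (𝒜 0)
  | 0, a => [a]
  | N + 1, a => wordApply (block σ N) (σ N a)

/-- `blockFrom σ n k = σ_[n,n+k)`, mapping a letter of `𝒜 (n+k)` to a word over `𝒜 n`. -/
def blockFrom (σ : ∀ n, 𝒜 (n + 1) → List (𝒜 n)) (n k : ℕ) : 𝒜 (n + k) → List (𝒜 n) :=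
  block (𝒜 := fun m => 𝒜 (n + m)) (fun m => σ (n + m)) k

/-- The language `ℒ^(n)_σ` of a directive sequence. -/
def sadicLang (σ : ∀ n, 𝒜 (n + 1) → List (𝒜 n)) (n : ℕ) : Set (List (𝒜 n)) :=
  {w | ∃ (k : ℕ) (a : 𝒜 (n + k)), 1 ≤ k ∧ w <:+: blockFrom σ n k a}

/-- The shift `X^(n)_σ` of a directive sequence. -/
def sadicX (σ : ∀ n, 𝒜 (n + 1) → List (𝒜 n)) (n : ℕ) : Set (ℤ → 𝒜 n) :=
  {x | ∀ w ∈ lang x, w ∈ sadicLang σ n}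

/-- A directive sequence is everywhere growing if `min_a |σ_[0,n)(a)| → ∞`. -/
def EverywhereGrowing (σ : ∀ n, 𝒜 (n + 1) → List (𝒜 n)) : Prop :=
  ∀ m : ℕ, ∃ N : ℕ, ∀ n ≥ N, ∀ a : 𝒜 n, m ≤ (block σ n a).length

end Sadic

end Recog

/-!
Cutting points compose: if `w = σ(x)` then `cut (τ ∘ σ) x = cut τ w ∘ cut σ x`. Hence a centered
`τ ∘ σ`-representation `(k, x)` of `z` splits into a centered `σ`-representation `(ℓ, x)` of
`y = T^ℓ σ(x)` and a centered `τ`-representation `(j, y)` of `z` with `k = j + |τ(σ(x)_[0,ℓ))|`,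
and conversely two such representations compose. Uniqueness therefore transfers in both
directions; for `τ` on `Y`, the `σ`-representation of `y` is first recentered, which uses the shift
invariance of `X`. Aperiodicity passes from `z` to `y`, since a period `p` of `y` gives the period
`|τ(y_[0,p))|` of `z`.
-/

section StrictMonoInt

variable {f : ℤ → ℤ}

theorem StrictMono.sub_le_sub_int (hf : StrictMono f) {m n : ℤ} (h : m ≤ n) :
    n - m ≤ f n - f m := by
  induction n, h using Int.leInduction with
  | base => simp
  | succ n _ ih => have := hf (lt_add_one n); omega

theorem StrictMono.exists_le_lt_succ_int (hf : StrictMono f) (c : ℤ) :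
    ∃ a, f a ≤ c ∧ c < f (a + 1) := by
  obtain ⟨a, ha, hmax⟩ := Int.exists_greatest_of_bdd (P := fun a => f a ≤ c)
    ⟨max 0 (c - f 0), fun a ha => by
      rcases le_or_gt a 0 with h | h
      · omega
      · have := hf.sub_le_sub_int h.le; omega⟩
    ⟨min 0 (c - f 0), by have := hf.sub_le_sub_int (min_le_left 0 (c - f 0)); omega⟩
  exact ⟨a, ha, not_le.1 fun h => by have := hmax _ h; omega⟩

theorem StrictMono.eq_of_le_lt_succ_int (hf : StrictMono f) {a b c : ℤ}
    (ha : f a ≤ c) (ha' : c < f (a + 1)) (hb : f b ≤ c) (hb' : c < f (b + 1)) : a = b := by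
  have h1 : a < b + 1 := hf.lt_iff_lt.1 (ha.trans_lt hb')
  have h2 : b < a + 1 := hf.lt_iff_lt.1 (hb.trans_lt ha')
  omega

end StrictMonoInt

namespace Recog

variable {A B C : Type*}

section Cut

variable (σ : A → List B) (x : ℤ → A)

theorem cut_zero : cut σ x 0 = 0 := by simp [cut]

theorem cut_succ (ℓ : ℤ) : cut σ x (ℓ + 1) = cut σ x ℓ + (σ (x ℓ)).length := by
  rcases le_or_gt 0 ℓ with h | h
  · rw [cut, cut, if_pos (by omega), if_pos h, show (ℓ + 1).toNat = ℓ.toNat + 1 by omega,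
      Finset.sum_range_succ, Int.toNat_of_nonneg h]
  · obtain h1 | h1 := (show ℓ + 1 ≤ 0 by omega).eq_or_lt
    · obtain rfl : ℓ = -1 := by omega
      simp [cut]
    · rw [cut, cut, if_neg (by omega), if_neg (by omega),
        show (-ℓ).toNat = (-(ℓ + 1)).toNat + 1 by omega, Finset.sum_range_succ,
        show -(((-(ℓ + 1)).toNat : ℕ) : ℤ) - 1 = ℓ by omega]
      ring

theorem cut_one : cut σ x 1 = (σ (x 0)).length := by
  simpa [cut_zero] using cut_succ σ x 0

theorem eq_cut_of {g : ℤ → ℤ} (h0 : g 0 = 0)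
    (hsucc : ∀ ℓ, g (ℓ + 1) = g ℓ + (σ (x ℓ)).length) : g = cut σ x := by
  funext ℓ
  induction ℓ using Int.induction_on with
  | zero => rw [h0, cut_zero]
  | succ n ih => rw [hsucc, cut_succ, ih]
  | pred n ih =>
    have h1 := hsucc (-n - 1)
    have h2 := cut_succ σ x (-n - 1)
    rw [sub_add_cancel] at h1 h2
    omega

theorem cut_shift (s : ℤ) :
    cut σ (fun n => x (n + s)) = fun m => cut σ x (m + s) - cut σ x s :=
  (eq_cut_of _ _ (by simp) fun ℓ => by rw [add_right_comm, cut_succ]; ring).symm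

theorem strictMono_cut (hσ : NonErasing σ) : StrictMono (cut σ x) :=
  strictMono_int_of_lt_succ fun ℓ => by
    have := List.length_pos_iff.2 (hσ (x ℓ))
    rw [cut_succ]
    omega

end Cut

section Points

variable {σ : A → List B} {x : ℤ → A} {y w : ℤ → B} {k : ℤ}

theorem IsSubstPt.shift (h : IsSubstPt σ x y) (s : ℤ) :
    IsSubstPt σ (fun n => x (n + s)) (fun n => y (n + cut σ x s)) := by
  intro ℓ j hj
  convert h (ℓ + s) j hj using 2
  rw [cut_shift]
  ring

theorem IsSubstPt.unique (hσ : NonErasing σ) {y' : ℤ → B} (h : IsSubstPt σ x y)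
    (h' : IsSubstPt σ x y') : y = y' := by
  funext n
  obtain ⟨ℓ, h1, h2⟩ := (strictMono_cut σ x hσ).exists_le_lt_succ_int n
  have hj : (n - cut σ x ℓ).toNat < (σ (x ℓ)).length := by rw [cut_succ] at h2; omega
  rw [show n = cut σ x ℓ + (n - cut σ x ℓ).toNat by omega, h ℓ _ hj, h' ℓ _ hj]

theorem exists_isSubstPt (hσ : NonErasing σ) (x : ℤ → A) : ∃ y, IsSubstPt σ x y := by
  choose ℓ hℓ using (strictMono_cut σ x hσ).exists_le_lt_succ_int
  refine ⟨fun n => (σ (x (ℓ n)))[(n - cut σ x (ℓ n)).toNat]'(by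
    have := hℓ n; rw [cut_succ] at this; omega), fun m j hj => ?_⟩
  have hm : ℓ (cut σ x m + j) = m := by
    have := cut_succ σ x m
    exact (strictMono_cut σ x hσ).eq_of_le_lt_succ_int (hℓ _).1 (hℓ _).2 (by omega) (by omega)
  simp [hm]

theorem IsRep.eq_shift (hσ : NonErasing σ) (hy : IsRep σ y k x) (hw : IsSubstPt σ x w) :
    y = fun n => w (n + k) := by
  funext n
  simpa using congrFun (hy.unique hσ hw) (n + k)

theorem IsSubstPt.isRep (hw : IsSubstPt σ x w) (k : ℤ) : IsRep σ (fun n => w (n + k)) k x := by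
  simpa [IsRep] using hw

theorem isRep_shift_iff (s : ℤ) :
    IsRep σ y k (fun n => x (n + s)) ↔ IsRep σ y (k + cut σ x s) x := by
  have key : ∀ {x : ℤ → A} {k : ℤ} (s : ℤ), IsRep σ y k x →
      IsRep σ y (k - cut σ x s) (fun n => x (n + s)) := fun s h => by
    unfold IsRep
    convert h.shift s using 3
    ring
  refine ⟨fun h => ?_, fun h => by simpa using key s h⟩
  simpa [cut_shift, cut_zero] using key (-s) h

theorem IsRep.isCenteredRep_shift {ℓ : ℤ} (hy : IsRep σ y k x) (h : cut σ x ℓ ≤ k)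
    (h' : k < cut σ x (ℓ + 1)) :
    IsCenteredRep σ y (k - cut σ x ℓ) (fun n => x (n + ℓ)) := by
  rw [cut_succ] at h'
  exact ⟨(isRep_shift_iff ℓ).2 (by simpa using hy), by omega, by simpa using by omega⟩

theorem IsRep.aperiodic {τ : B → List C} (hτ : NonErasing τ) {z : ℤ → C} {j : ℤ}
    (hz : IsRep τ z j y) (haz : Aperiodic z) : Aperiodic y := by
  intro p hp hper
  have hpos : 0 < cut τ y p := by
    simpa [cut_zero] using strictMono_cut τ y hτ (show (0 : ℤ) < p by omega)
  have hv := hz.shift p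
  rw [hper] at hv
  refine haz (cut τ y p).toNat (by omega) (funext fun n => ?_)
  convert congrFun (hv.unique hτ hz) (n + j) using 1
  · rw [Int.toNat_of_nonneg hpos.le]
    ring_nf
  · simp

end Points

theorem ShiftInvariant.shift_mem {X : Set (ℤ → A)} (hX : ShiftInvariant X) {x : ℤ → A}
    (hx : x ∈ X) (s : ℤ) : (fun n => x (n + s)) ∈ X := by
  induction s using Int.induction_on with
  | zero => simpa using hx
  | succ n ih => convert (hX _ ih).1 using 3; ring
  | pred n ih => convert (hX _ ih).2 using 3; ring

/-- The set `Y = ⋃ₖ Tᵏ σ(X)`. -/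
def shiftImage (σ : A → List B) (X : Set (ℤ → A)) : Set (ℤ → B) :=
  {y | ∃ (k : ℤ) (x : ℤ → A), x ∈ X ∧ IsRep σ y k x}

theorem exists_isCenteredRep_of_mem_shiftImage {σ : A → List B} (hσ : NonErasing σ)
    {X : Set (ℤ → A)} (hX : ShiftInvariant X) {y : ℤ → B} (hy : y ∈ shiftImage σ X) :
    ∃ k x, x ∈ X ∧ IsCenteredRep σ y k x := by
  obtain ⟨k, x, hx, hk⟩ := hy
  obtain ⟨ℓ, h, h'⟩ := (strictMono_cut σ x hσ).exists_le_lt_succ_int k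
  exact ⟨_, _, hX.shift_mem hx ℓ, hk.isCenteredRep_shift h h'⟩

section Composition

variable {σ : A → List B} {τ : B → List C} {x : ℤ → A} {w : ℤ → B} {z : ℤ → C}

theorem wordApply_append (τ : B → List C) (u v : List B) :
    wordApply τ (u ++ v) = wordApply τ u ++ wordApply τ v := by
  induction u with
  | nil => rfl
  | cons a u ih => simp [wordApply, ih]

theorem factor_eq_map (y : ℤ → B) (i : ℤ) (m : ℕ) :
    factor y i m = (List.range m).map fun j : ℕ => y (i + j) := by
  induction m <;> simp_all [factor, List.range_succ]

theorem factor_add (y : ℤ → B) (i : ℤ) (m n : ℕ) :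
    factor y i (m + n) = factor y i m ++ factor y (i + m) n := by
  simp [factor_eq_map, List.range_add, add_assoc]

theorem wordApply_factor_one (τ : B → List C) (w : ℤ → B) (i : ℤ) :
    wordApply τ (factor w i 1) = τ (w i) := by
  simp [factor_eq_map, wordApply]

theorem isSubstPt_iff_factor {y : ℤ → B} :
    IsSubstPt σ x y ↔ ∀ ℓ, factor y (cut σ x ℓ) (σ (x ℓ)).length = σ (x ℓ) := by
  simp only [factor_eq_map]
  refine ⟨fun h ℓ => List.ext_getElem (by simp) fun j hj _ => ?_, fun h ℓ j hj => ?_⟩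
  · simpa using h ℓ j (by simpa using hj)
  · simpa using (List.getElem_of_eq (h ℓ).symm hj).symm

theorem length_wordApply_factor (τ : B → List C) (w : ℤ → B) (i : ℤ) (n : ℕ) :
    ((wordApply τ (factor w i n)).length : ℤ) = cut τ w (i + n) - cut τ w i := by
  induction n with
  | zero => simp [factor_eq_map, wordApply]
  | succ n ih =>
    rw [factor_add, wordApply_append, wordApply_factor_one, List.length_append, Nat.cast_add, ih,
      Nat.cast_succ, ← add_assoc, cut_succ]
    ring

theorem IsSubstPt.wordApply_factor (hz : IsSubstPt τ w z) (i : ℤ) (n : ℕ) :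
    wordApply τ (factor w i n) = factor z (cut τ w i) (wordApply τ (factor w i n)).length := by
  induction n with
  | zero => simp [factor_eq_map, wordApply]
  | succ n ih =>
    have hlen := length_wordApply_factor τ w i n
    rw [factor_add, wordApply_append, List.length_append, factor_add, ← ih, wordApply_factor_one,
      show cut τ w i + ((wordApply τ (factor w i n)).length : ℕ) = cut τ w (i + n) by omega,
      isSubstPt_iff_factor.1 hz]

theorem IsSubstPt.cut_comp (hw : IsSubstPt σ x w) :
    cut (comp τ σ) x = fun ℓ => cut τ w (cut σ x ℓ) := by
  refine (eq_cut_of _ _ (by simp [cut_zero]) fun ℓ => ?_).symm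
  have h := length_wordApply_factor τ w (cut σ x ℓ) (σ (x ℓ)).length
  rw [isSubstPt_iff_factor.1 hw ℓ] at h
  simp only [comp, cut_succ σ]
  omega

theorem isSubstPt_comp (hw : IsSubstPt σ x w) (hz : IsSubstPt τ w z) :
    IsSubstPt (comp τ σ) x z := by
  refine isSubstPt_iff_factor.2 fun ℓ => ?_
  have h := hz.wordApply_factor (cut σ x ℓ) (σ (x ℓ)).length
  rw [isSubstPt_iff_factor.1 hw ℓ] at h
  rw [hw.cut_comp]
  exact h.symm

theorem NonErasing.comp (hσ : NonErasing σ) (hτ : NonErasing τ) : NonErasing (comp τ σ) := by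
  intro a
  obtain ⟨b, u, hu⟩ := List.exists_cons_of_ne_nil (hσ a)
  simp [Recog.comp, hu, wordApply, hτ b]

theorem isRep_comp_iff (hσ : NonErasing σ) (hτ : NonErasing τ)
    (hw : IsSubstPt σ x w) {c : ℤ} : IsRep (comp τ σ) z c x ↔ IsRep τ z c w := by
  refine ⟨fun h => ?_, isSubstPt_comp hw⟩
  obtain ⟨v, hv⟩ := exists_isSubstPt hτ w
  rw [IsRep, ← (isSubstPt_comp hw hv).unique (hσ.comp hτ) h]
  exact hv

theorem isCenteredRep_comp (hσ : NonErasing σ) (hτ : NonErasing τ) (hw : IsSubstPt σ x w)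
    {y : ℤ → B} {k j : ℤ} (hy : IsCenteredRep σ y k x) (hz : IsCenteredRep τ z j y) :
    IsCenteredRep (comp τ σ) z (j + cut τ w k) x := by
  obtain rfl := hy.1.eq_shift hσ hw
  obtain ⟨-, hk0, hk1⟩ := hy
  obtain ⟨hz, hj0, hj1⟩ := hz
  have hmono := strictMono_cut τ w hτ
  refine ⟨(isRep_comp_iff hσ hτ hw).2 ((isRep_shift_iff k).1 hz), ?_, ?_⟩
  · have := hmono.monotone hk0
    rw [cut_zero] at this
    omega
  · have h1 := hmono.monotone (show k + 1 ≤ (σ (x 0)).length by omega)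
    have h2 := cut_succ τ w k
    have h3 := congrFun (hw.cut_comp (τ := τ)) 1
    simp only [cut_one] at h3
    simp only [zero_add] at hj1
    omega

theorem exists_isCenteredRep_of_comp (hσ : NonErasing σ) (hτ : NonErasing τ)
    (hw : IsSubstPt σ x w) {k : ℤ} (hz : IsCenteredRep (comp τ σ) z k x) :
    ∃ ℓ, IsCenteredRep σ (fun n => w (n + ℓ)) ℓ x ∧
      IsCenteredRep τ z (k - cut τ w ℓ) (fun n => w (n + ℓ)) := by
  obtain ⟨hz, hk0, hk1⟩ := hz
  have hmono := strictMono_cut τ w hτ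
  obtain ⟨ℓ, h, h'⟩ := hmono.exists_le_lt_succ_int k
  have h3 := congrFun (hw.cut_comp (τ := τ)) 1
  simp only [cut_one] at h3
  refine ⟨ℓ, ⟨hw.isRep ℓ, ?_, hmono.lt_iff_lt.1 (by omega)⟩,
    ((isRep_comp_iff hσ hτ hw).1 hz).isCenteredRep_shift h h'⟩
  have : (0 : ℤ) < ℓ + 1 := hmono.lt_iff_lt.1 (by rw [cut_zero]; omega)
  omega

end Composition

section Recognizability

variable {σ : A → List B} {τ : B → List C} {X : Set (ℤ → A)}

/-- `RecIn σ X` says that every point satisfies this, `RecInAp σ X` that every aperiodic one does. -/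
def UniqueCenteredRep (σ : A → List B) (X : Set (ℤ → A)) (y : ℤ → B) : Prop :=
  ∀ (k k' : ℤ) (x x' : ℤ → A), x ∈ X → x' ∈ X →
    IsCenteredRep σ y k x → IsCenteredRep σ y k' x' → k = k' ∧ x = x'

theorem uniqueCenteredRep_of_comp (hσ : NonErasing σ) (hτ : NonErasing τ) {y : ℤ → B}
    {z : ℤ → C} (hz : IsSubstPt τ y z) (h : UniqueCenteredRep (comp τ σ) X z) :
    UniqueCenteredRep σ X y := by
  intro k k' x x' hx hx' hk hk'
  obtain ⟨w, hw⟩ := exists_isSubstPt hσ x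
  obtain ⟨w', hw'⟩ := exists_isSubstPt hσ x'
  have hz0 : IsCenteredRep τ z 0 y :=
    ⟨by simpa [IsRep] using hz, le_rfl, by simpa using List.length_pos_iff.2 (hτ (y 0))⟩
  obtain ⟨hc, rfl⟩ := h _ _ _ _ hx hx' (isCenteredRep_comp hσ hτ hw hk hz0)
    (isCenteredRep_comp hσ hτ hw' hk' hz0)
  obtain rfl := hw.unique hσ hw'
  exact ⟨(strictMono_cut τ w hτ).injective (by omega), rfl⟩

theorem uniqueCenteredRep_shiftImage_of_comp (hσ : NonErasing σ) (hτ : NonErasing τ)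
    (hX : ShiftInvariant X) {z : ℤ → C} (h : UniqueCenteredRep (comp τ σ) X z) :
    UniqueCenteredRep τ (shiftImage σ X) z := by
  intro j j' y y' hy hy' hj hj'
  obtain ⟨k, x, hx, hk⟩ := exists_isCenteredRep_of_mem_shiftImage hσ hX hy
  obtain ⟨k', x', hx', hk'⟩ := exists_isCenteredRep_of_mem_shiftImage hσ hX hy'
  obtain ⟨w, hw⟩ := exists_isSubstPt hσ x
  obtain ⟨w', hw'⟩ := exists_isSubstPt hσ x'
  obtain ⟨hc, rfl⟩ := h _ _ _ _ hx hx' (isCenteredRep_comp hσ hτ hw hk hj)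
    (isCenteredRep_comp hσ hτ hw' hk' hj')
  obtain rfl := hw.unique hσ hw'
  obtain rfl := hk.1.eq_shift hσ hw
  obtain rfl := hk'.1.eq_shift hσ hw
  obtain ⟨-, hj0, hj1⟩ := hj
  obtain ⟨-, hj0', hj1'⟩ := hj'
  simp only [zero_add] at hj1 hj1'
  have := cut_succ τ w k
  have := cut_succ τ w k'
  -- both offsets locate the same letter of `τ(w)`, inside the blocks `τ(w k)` and `τ(w k')`
  obtain rfl : k = k' := (strictMono_cut τ w hτ).eq_of_le_lt_succ_int (c := j + cut τ w k)
    (by omega) (by omega) (by omega) (by omega)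
  exact ⟨by omega, rfl⟩

theorem uniqueCenteredRep_comp (hσ : NonErasing σ) (hτ : NonErasing τ) {z : ℤ → C}
    (hτY : UniqueCenteredRep τ (shiftImage σ X) z)
    (hσX : ∀ j y, IsRep τ z j y → UniqueCenteredRep σ X y) :
    UniqueCenteredRep (comp τ σ) X z := by
  intro k k' x x' hx hx' hk hk'
  obtain ⟨w, hw⟩ := exists_isSubstPt hσ x
  obtain ⟨w', hw'⟩ := exists_isSubstPt hσ x'
  obtain ⟨ℓ, hσℓ, hτℓ⟩ := exists_isCenteredRep_of_comp hσ hτ hw hk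
  obtain ⟨ℓ', hσℓ', hτℓ'⟩ := exists_isCenteredRep_of_comp hσ hτ hw' hk'
  obtain ⟨hj, hy⟩ := hτY _ _ _ _ ⟨ℓ, x, hx, hσℓ.1⟩ ⟨ℓ', x', hx', hσℓ'.1⟩ hτℓ hτℓ'
  rw [← hy] at hσℓ'
  obtain ⟨rfl, rfl⟩ := hσX _ _ hτℓ.1 _ _ _ _ hx hx' hσℓ hσℓ'
  obtain rfl := hw.unique hσ hw'
  exact ⟨by omega, rfl⟩

end Recognizability

end Recog

open Recog in
theorem stmt13_general {A B C : Type*}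
    (σ : A → List B) (τ : B → List C) (hσ : NonErasing σ) (hτ : NonErasing τ)
    (X : Set (ℤ → A)) (hXinv : ShiftInvariant X) :
    (RecIn (comp τ σ) X ↔ RecIn σ X ∧
        RecIn τ {y : ℤ → B | ∃ (k : ℤ) (x : ℤ → A), x ∈ X ∧ IsRep σ y k x}) ∧
    (RecInAp σ X → RecInAp τ {y : ℤ → B | ∃ (k : ℤ) (x : ℤ → A), x ∈ X ∧ IsRep σ y k x} →
      RecInAp (comp τ σ) X) ∧
    (RecInAp (comp τ σ) X →
      RecInAp τ {y : ℤ → B | ∃ (k : ℤ) (x : ℤ → A), x ∈ X ∧ IsRep σ y k x}) := by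
  refine ⟨⟨fun h => ⟨fun y => ?_, fun z => ?_⟩, fun h z => ?_⟩, fun hσX hτY z hz => ?_,
    fun h z hz => ?_⟩
  · obtain ⟨v, hv⟩ := exists_isSubstPt hτ y
    exact uniqueCenteredRep_of_comp hσ hτ hv (h v)
  · exact uniqueCenteredRep_shiftImage_of_comp hσ hτ hXinv (h z)
  · exact uniqueCenteredRep_comp hσ hτ (h.2 z) fun _ y _ => h.1 y
  · exact uniqueCenteredRep_comp hσ hτ (hτY z hz) fun _ y hy => hσX y (hy.aperiodic hτ hz)
  · exact uniqueCenteredRep_shiftImage_of_comp hσ hτ hXinv (h z hz)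

open Recog in
/-- Recognizability of a composition `τ ∘ σ` in a shift `X`, in terms of
recognizability of `σ` in `X` and of `τ` in `Y = ∪_k T^k σ(X)`. -/
theorem stmt13 {A B C : Type*} [Fintype A] [Fintype B] [Fintype C]
    [TopologicalSpace A] [DiscreteTopology A]
    (σ : A → List B) (τ : B → List C) (hσ : NonErasing σ) (hτ : NonErasing τ)
    (X : Set (ℤ → A)) (hXcl : IsClosed X) (hXinv : ShiftInvariant X) :
    (RecIn (comp τ σ) X ↔ RecIn σ X ∧
        RecIn τ {y : ℤ → B | ∃ (k : ℤ) (x : ℤ → A), x ∈ X ∧ IsRep σ y k x}) ∧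
    (RecInAp σ X → RecInAp τ {y : ℤ → B | ∃ (k : ℤ) (x : ℤ → A), x ∈ X ∧ IsRep σ y k x} →
      RecInAp (comp τ σ) X) ∧
    (RecInAp (comp τ σ) X →
      RecInAp τ {y : ℤ → B | ∃ (k : ℤ) (x : ℤ → A), x ∈ X ∧ IsRep σ y k x}) :=
  stmt13_general σ τ hσ hτ X hXinv
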